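/- There exists a defeasible theory D such that T(D) has no extension. In particular, for D consisting of the defeasible rules r₁: ⇒ p, r₂: p ⇒ q, r₃: q ⇒ ¬p (with empty superiority relation), the default theory T(D) has no closed and successful process, hence no extension. -/

import Mathlib

/-! Core: propositional Defeasible Logic (proof theory via derivations) -/

/-- Literals: positive or negative atoms. -/
inductive Lit : Type
  | pos : ℕ → Lit
  | neg : ℕ → Lit
deriving DecidableEq, Repr

/-- The complement `~q` of a literal. -/
def Lit.compl : Lit → Lit
  | .pos n => .neg n
  | .neg n => .pos n

/-- The three kinds of rules in a defeasible theory. -/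
inductive RuleKind : Type
  | strict | defeasible | defeater
deriving DecidableEq, Repr

/-- A rule with a unique label (name), kind, antecedent and literal head. -/
structure DLRule : Type where
  name : ℕ
  kind : RuleKind
  ante : List Lit
  head : Lit
deriving DecidableEq, Repr

/-- A (finite, propositional) defeasible theory `D = (F, R, >)`. -/
structure DTheory : Type where
  facts : Finset Lit
  rules : Finset DLRule
  sup : DLRule → DLRule → Prop

/-- The four proof tags `+Δ`, `-Δ`, `+∂`, `-∂`. -/
inductive Tag : Type
  | pDelta | mDelta | pPartial | mPartial
deriving DecidableEq, Repr

/-- A tagged literal (a conclusion). -/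
abbrev TaggedLit := Tag × Lit

/-- The inference conditions of Defeasible Logic: the tagged literal `c` may
be appended to a derivation whose earlier lines are `prev`. -/
def ValidLine (D : DTheory) (prev : List TaggedLit) : TaggedLit → Prop
  | (Tag.pDelta, q) =>
      q ∈ D.facts ∨
      ∃ r ∈ D.rules, r.kind = RuleKind.strict ∧ r.head = q ∧
        ∀ a ∈ r.ante, (Tag.pDelta, a) ∈ prev
  | (Tag.mDelta, q) =>
      q ∉ D.facts ∧
      ∀ r ∈ D.rules, r.kind = RuleKind.strict → r.head = q →
        ∃ a ∈ r.ante, (Tag.mDelta, a) ∈ prev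
  | (Tag.pPartial, q) =>
      (Tag.pDelta, q) ∈ prev ∨
      ((∃ r ∈ D.rules, r.kind ≠ RuleKind.defeater ∧ r.head = q ∧
          ∀ a ∈ r.ante, (Tag.pPartial, a) ∈ prev) ∧
       (Tag.mDelta, q.compl) ∈ prev ∧
       ∀ s ∈ D.rules, s.head = q.compl →
         (∃ a ∈ s.ante, (Tag.mPartial, a) ∈ prev) ∨
         (∃ t ∈ D.rules, t.kind ≠ RuleKind.defeater ∧ t.head = q ∧
           (∀ a ∈ t.ante, (Tag.pPartial, a) ∈ prev) ∧ D.sup t s))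
  | (Tag.mPartial, q) =>
      (Tag.mDelta, q) ∈ prev ∧
      ((∀ r ∈ D.rules, r.kind ≠ RuleKind.defeater → r.head = q →
          ∃ a ∈ r.ante, (Tag.mPartial, a) ∈ prev) ∨
       (Tag.pDelta, q.compl) ∈ prev ∨
       (∃ s ∈ D.rules, s.head = q.compl ∧
          (∀ a ∈ s.ante, (Tag.pPartial, a) ∈ prev) ∧
          ∀ t ∈ D.rules, t.kind ≠ RuleKind.defeater → t.head = q →
            (∃ a ∈ t.ante, (Tag.mPartial, a) ∈ prev) ∨ ¬ D.sup t s))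

/-- `P` is a derivation in `D`: a finite sequence of tagged literals each of
which satisfies the inference conditions w.r.t. the earlier lines. -/
def IsDerivation (D : DTheory) (P : List TaggedLit) : Prop :=
  ∀ (i : ℕ) (h : i < P.length), ValidLine D (P.take i) (P.get ⟨i, h⟩)

/-- `D ⊢ (t, q)` : the tagged literal is a line of some derivation in `D`. -/
def Proves (D : DTheory) (t : Tag) (q : Lit) : Prop :=
  ∃ P : List TaggedLit, IsDerivation D P ∧ (t, q) ∈ P

/-- `D ⊢ +Δ q`. -/
abbrev PDelta (D : DTheory) (q : Lit) : Prop := Proves D Tag.pDelta q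
/-- `D ⊢ -Δ q`. -/
abbrev MDelta (D : DTheory) (q : Lit) : Prop := Proves D Tag.mDelta q
/-- `D ⊢ +∂ q`. -/
abbrev PPartial (D : DTheory) (q : Lit) : Prop := Proves D Tag.pPartial q
/-- `D ⊢ -∂ q`. -/
abbrev MPartial (D : DTheory) (q : Lit) : Prop := Proves D Tag.mPartial q

/-- `q` is strictly unknowable in `D`. -/
def StrictlyUnknowable (D : DTheory) (q : Lit) : Prop := ¬ PDelta D q ∧ ¬ MDelta D q

/-- `q` is defeasibly unknowable in `D`. -/
def DefeasiblyUnknowable (D : DTheory) (q : Lit) : Prop := ¬ PPartial D q ∧ ¬ MPartial D q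

/-- `q` is unknowable in `D`. -/
def Unknowable (D : DTheory) (q : Lit) : Prop :=
  StrictlyUnknowable D q ∨ DefeasiblyUnknowable D q

/-- The point `{q, ~q}` of the dependency graph corresponding to a literal `q`. -/
def Lit.pt (q : Lit) : Set Lit := {q, q.compl}

/-- Arc of the dependency graph `DG(D)` from point `{b,~b}` to point `{a,~a}`:
there is a strict or defeasible rule whose head is in `{b,~b}` and some antecedent
in `{a,~a}`.  (Stated on representative literals; it is complement-invariant.) -/
def DepArc (D : DTheory) (b a : Lit) : Prop :=
  ∃ r ∈ D.rules, r.kind ≠ RuleKind.defeater ∧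
    (r.head = b ∨ r.head = b.compl) ∧ (a ∈ r.ante ∨ a.compl ∈ r.ante)

/-- `D` is decisive iff its dependency graph is acyclic. -/
def Decisive (D : DTheory) : Prop := ∀ q : Lit, ¬ Relation.TransGen (DepArc D) q q

/-! Core: propositional formulas, deductive closure, and Reiter default logic -/

/-- Propositional formulas over atoms `α`. -/
inductive Fm (α : Type) : Type
  | atom : α → Fm α
  | fals : Fm α
  | imp : Fm α → Fm α → Fm α

/-- Negation. -/
def Fm.neg {α : Type} (φ : Fm α) : Fm α := φ.imp .fals

/-- Conjunction. -/
def Fm.conj {α : Type} (φ ψ : Fm α) : Fm α := ((φ.imp (ψ.imp .fals)).imp .fals)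

/-- Conjunction of a list of formulas (the empty conjunction is `⊤`). -/
def Fm.conjList {α : Type} : List (Fm α) → Fm α
  | [] => Fm.fals.imp Fm.fals
  | φ :: l => φ.conj (Fm.conjList l)

/-- Classical evaluation of a formula under a valuation. -/
def Fm.eval {α : Type} (v : α → Prop) : Fm α → Prop
  | .atom a => v a
  | .fals => False
  | .imp φ ψ => φ.eval v → ψ.eval v

/-- `Th S` : the deductive closure (classical consequences) of a set of formulas. -/
def Th {α : Type} (S : Set (Fm α)) : Set (Fm α) :=
  {φ | ∀ v : α → Prop, (∀ ψ ∈ S, ψ.eval v) → φ.eval v}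

/-- A default `φ : ψ₁,…,ψₙ / χ`. -/
structure Default (α : Type) : Type where
  pre : Fm α
  just : List (Fm α)
  cons : Fm α

/-- A default theory `(W, Def)`. -/
structure DefaultTheory (α : Type) : Type where
  W : Set (Fm α)
  defaults : Set (Default α)

/-- A default is applicable to a (deductively closed) set `E` iff its
prerequisite is in `E` and no negated justification is in `E`. -/
def DLApplicable {α : Type} (δ : Default α) (E : Set (Fm α)) : Prop :=
  δ.pre ∈ E ∧ ∀ ψ ∈ δ.just, ψ.neg ∉ E

/-- A (finite or infinite) process of a default theory: a sequence of defaults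
without repetitions, each applicable to `In` of the preceding initial segment. -/
structure DProcess {α : Type} (T : DefaultTheory α) : Type where
  seq : ℕ → Option (Default α)
  prefixClosed : ∀ n, seq n = none → seq (n + 1) = none
  mem : ∀ n δ, seq n = some δ → δ ∈ T.defaults
  noRepeat : ∀ m n δ, seq m = some δ → seq n = some δ → m = n
  applicable : ∀ n δ, seq n = some δ →
    DLApplicable δ (Th (T.W ∪ {φ | ∃ m < n, ∃ δ', seq m = some δ' ∧ φ = δ'.cons}))

/-- `In(Π)`. -/
def DProcess.In {α : Type} {T : DefaultTheory α} (P : DProcess T) : Set (Fm α) :=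
  Th (T.W ∪ {φ | ∃ n δ, P.seq n = some δ ∧ φ = δ.cons})

/-- `Out(Π)`. -/
def DProcess.Out {α : Type} {T : DefaultTheory α} (P : DProcess T) : Set (Fm α) :=
  {φ | ∃ n δ, P.seq n = some δ ∧ ∃ ψ ∈ δ.just, φ = ψ.neg}

/-- A process is successful iff `In(Π) ∩ Out(Π) = ∅`. -/
def DProcess.Successful {α : Type} {T : DefaultTheory α} (P : DProcess T) : Prop :=
  P.In ∩ P.Out = ∅

/-- A process is closed iff every applicable default already occurs in it. -/
def DProcess.Closed {α : Type} {T : DefaultTheory α} (P : DProcess T) : Prop :=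
  ∀ δ ∈ T.defaults, DLApplicable δ P.In → ∃ n, P.seq n = some δ

/-- `E` is an extension of `T` iff `E = In(Π)` for some closed successful process. -/
def IsExtension {α : Type} (T : DefaultTheory α) (E : Set (Fm α)) : Prop :=
  ∃ P : DProcess T, P.Closed ∧ P.Successful ∧ E = P.In

/-! Core: atoms of the meta-language of the logic-programming translation -/

/-- Ground atoms of the meta-program: `fact`, `strict`, `defeasible`, `defeater`,
`sup`, `definitely`, `defeasibly`, `overruled`, `defeated`, `supportive_rule`, `rule`. -/
inductive MAtom : Type
  | fact : Lit → MAtom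
  | strict : ℕ → Lit → List Lit → MAtom
  | defeasible : ℕ → Lit → List Lit → MAtom
  | defeater : ℕ → Lit → List Lit → MAtom
  | sup : ℕ → ℕ → MAtom
  | definitely : Lit → MAtom
  | defeasibly : Lit → MAtom
  | overruled : ℕ → Lit → MAtom
  | defeated : ℕ → Lit → MAtom
  | supportive_rule : ℕ → Lit → List Lit → MAtom
  | rule : ℕ → Lit → List Lit → MAtom
deriving DecidableEq

/-! Core: the default theory `T(D) = (W(D), Def(D))` translating a defeasible theory -/

/-- `W(D)` : the facts of the translation, encoding the defeasible theory `D`. -/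
def WD (D : DTheory) : Set (Fm MAtom) :=
  {φ | (∃ p ∈ D.facts, φ = .atom (.fact p)) ∨
       (∃ r ∈ D.rules, r.kind = RuleKind.strict ∧
          φ = .atom (.strict r.name r.head r.ante)) ∨
       (∃ r ∈ D.rules, r.kind = RuleKind.defeasible ∧
          φ = .atom (.defeasible r.name r.head r.ante)) ∨
       (∃ r ∈ D.rules, r.kind = RuleKind.defeater ∧
          φ = .atom (.defeater r.name r.head r.ante)) ∨
       (∃ r ∈ D.rules, ∃ s ∈ D.rules, D.sup r s ∧ φ = .atom (.sup r.name s.name))}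

/-- `Def(D)` : all ground instances of the default schemas `d₁`–`d₁₀`. -/
def DefD : Set (Default MAtom) :=
  {δ |
    -- d₁
    (∃ X, δ = ⟨.atom (.fact X), [], .atom (.definitely X)⟩) ∨
    -- d₂
    (∃ (R : ℕ) (X : Lit) (Ys : List Lit),
      δ = ⟨Fm.conjList (.atom (.strict R X Ys) :: Ys.map (fun y => .atom (.definitely y))),
           [], .atom (.definitely X)⟩) ∨
    -- d₃
    (∃ X, δ = ⟨.atom (.definitely X), [], .atom (.defeasibly X)⟩) ∨
    -- d₄
    (∃ (R : ℕ) (X : Lit) (Ys : List Lit),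
      δ = ⟨Fm.conjList (.atom (.supportive_rule R X Ys) :: Ys.map (fun y => .atom (.defeasibly y))),
           [Fm.neg (.atom (.definitely X.compl)), Fm.neg (.atom (.overruled R X))],
           .atom (.defeasibly X)⟩) ∨
    -- d₅
    (∃ (R S : ℕ) (X : Lit) (Us : List Lit),
      δ = ⟨Fm.conjList (.atom (.rule S X.compl Us) :: Us.map (fun u => .atom (.defeasibly u))),
           [Fm.neg (.atom (.defeated S X.compl))], .atom (.overruled R X)⟩) ∨
    -- d₆
    (∃ (S T : ℕ) (X : Lit) (Vs : List Lit),
      δ = ⟨Fm.conjList (.atom (.sup T S) :: .atom (.supportive_rule T X Vs) ::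
             Vs.map (fun v => .atom (.defeasibly v))),
           [], .atom (.defeated S X)⟩) ∨
    -- d₇
    (∃ (N : ℕ) (H : Lit) (B : List Lit),
      δ = ⟨.atom (.strict N H B), [], .atom (.supportive_rule N H B)⟩) ∨
    -- d₈
    (∃ (N : ℕ) (H : Lit) (B : List Lit),
      δ = ⟨.atom (.defeasible N H B), [], .atom (.supportive_rule N H B)⟩) ∨
    -- d₉
    (∃ (N : ℕ) (H : Lit) (B : List Lit),
      δ = ⟨.atom (.supportive_rule N H B), [], .atom (.rule N H B)⟩) ∨
    -- d₁₀
    (∃ (N : ℕ) (H : Lit) (B : List Lit),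
      δ = ⟨.atom (.defeater N H B), [], .atom (.rule N H B)⟩)}

/-- The default theory `T(D)` corresponding to the meta-program for `D`. -/
def TDdefault (D : DTheory) : DefaultTheory MAtom := ⟨WD D, DefD⟩

/-- The defeasible theory with rules `r₁: ⇒ p`, `r₂: p ⇒ q`, `r₃: q ⇒ ¬p`
and empty superiority relation. -/
def Dloop : DTheory :=
  ⟨∅,
   {⟨1, RuleKind.defeasible, [], Lit.pos 0⟩,
    ⟨2, RuleKind.defeasible, [Lit.pos 0], Lit.pos 1⟩,
    ⟨3, RuleKind.defeasible, [Lit.pos 1], Lit.neg 0⟩},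
   fun _ _ => False⟩

/-! ### Auxiliary lemmas for the no-extension theorem -/

section NoExtAux

private lemma subset_Th' {α : Type} (S : Set (Fm α)) : S ⊆ Th S :=
  fun _φ hφ _v hv => hv _ hφ

private lemma Th_mono' {α : Type} {S S' : Set (Fm α)} (h : S ⊆ S') : Th S ⊆ Th S' :=
  fun _φ hφ v hv => hφ v (fun ψ hψ => hv ψ (h hψ))

private lemma eval_conjList' {α : Type} (v : α → Prop) (l : List (Fm α)) :
    (Fm.conjList l).eval v ↔ ∀ φ ∈ l, φ.eval v := by
  induction l with
  | nil => simp [Fm.conjList, Fm.eval]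
  | cons φ l ih =>
    simp only [Fm.conjList, Fm.conj, Fm.eval, List.mem_cons]
    constructor
    · intro h
      have hab : φ.eval v ∧ (Fm.conjList l).eval v := by
        by_contra hc
        exact h fun hφ hrest => hc ⟨hφ, hrest⟩
      rintro ψ (rfl | hψ)
      · exact hab.1
      · exact ih.mp hab.2 ψ hψ
    · intro h hc
      exact hc (h φ (Or.inl rfl)) (ih.mpr fun ψ hψ => h ψ (Or.inr hψ))

private lemma atom_mem_Th' {α : Type} {S : Set (Fm α)} (hS : ∀ φ ∈ S, ∃ a, φ = Fm.atom a)
    (b : α) : Fm.atom b ∈ Th S ↔ Fm.atom b ∈ S := by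
  constructor
  · intro h
    exact h (fun a => Fm.atom a ∈ S) (fun ψ hψ => by obtain ⟨a, rfl⟩ := hS ψ hψ; exact hψ)
  · exact fun h v hv => hv _ h

private lemma negneg_mem_Th' {α : Type} {S : Set (Fm α)} (hS : ∀ φ ∈ S, ∃ a, φ = Fm.atom a)
    (b : α) : (Fm.neg (Fm.atom b)).neg ∈ Th S ↔ Fm.atom b ∈ S := by
  constructor
  · intro h
    have h2 := h (fun a => Fm.atom a ∈ S)
      (fun ψ hψ => by obtain ⟨a, rfl⟩ := hS ψ hψ; exact hψ)
    simp only [Fm.neg, Fm.eval] at h2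
    by_contra hb
    exact h2 fun hb' => hb hb'
  · intro h v hv
    simp only [Fm.neg, Fm.eval]
    exact fun hn => hn (hv _ h)

private lemma conjList_mem_Th' {α : Type} {S : Set (Fm α)} (l : List (Fm α)) :
    Fm.conjList l ∈ Th S ↔ ∀ φ ∈ l, φ ∈ Th S := by
  constructor
  · intro h φ hφ v hv; exact (eval_conjList' v l).mp (h v hv) φ hφ
  · intro h v hv; exact (eval_conjList' v l).mpr fun φ hφ => h φ hφ v hv

private lemma mem_Dloop_rules {r : DLRule} : r ∈ Dloop.rules ↔
    r = ⟨1, RuleKind.defeasible, [], Lit.pos 0⟩ ∨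
    r = ⟨2, RuleKind.defeasible, [Lit.pos 0], Lit.pos 1⟩ ∨
    r = ⟨3, RuleKind.defeasible, [Lit.pos 1], Lit.neg 0⟩ := by
  simp [Dloop, Finset.mem_insert, Finset.mem_singleton]

private lemma mem_WD_Dloop {φ : Fm MAtom} : φ ∈ WD Dloop ↔
    φ = .atom (.defeasible 1 (Lit.pos 0) []) ∨
    φ = .atom (.defeasible 2 (Lit.pos 1) [Lit.pos 0]) ∨
    φ = .atom (.defeasible 3 (Lit.neg 0) [Lit.pos 1]) := by
  constructor
  · intro h
    simp only [WD, Set.mem_setOf_eq] at h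
    rcases h with ⟨p, hp, _⟩ | ⟨r, hr, hk, _⟩ | ⟨r, hr, _, rfl⟩ | ⟨r, hr, hk, _⟩ |
      ⟨r, _, s, _, hsup, _⟩
    · simp [Dloop] at hp
    · rcases mem_Dloop_rules.mp hr with rfl | rfl | rfl <;> simp at hk
    · rcases mem_Dloop_rules.mp hr with rfl | rfl | rfl <;> simp
    · rcases mem_Dloop_rules.mp hr with rfl | rfl | rfl <;> simp at hk
    · exact absurd hsup (by simp [Dloop])
  · intro h
    simp only [WD, Set.mem_setOf_eq]
    rcases h with rfl | rfl | rfl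
    · exact Or.inr (Or.inr (Or.inl ⟨⟨1, RuleKind.defeasible, [], Lit.pos 0⟩,
        mem_Dloop_rules.mpr (Or.inl rfl), rfl, rfl⟩))
    · exact Or.inr (Or.inr (Or.inl ⟨⟨2, RuleKind.defeasible, [Lit.pos 0], Lit.pos 1⟩,
        mem_Dloop_rules.mpr (Or.inr (Or.inl rfl)), rfl, rfl⟩))
    · exact Or.inr (Or.inr (Or.inl ⟨⟨3, RuleKind.defeasible, [Lit.pos 1], Lit.neg 0⟩,
        mem_Dloop_rules.mpr (Or.inr (Or.inr rfl)), rfl, rfl⟩))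

end NoExtAux

private theorem TDloop_no_process :
    ¬ ∃ P : DProcess (TDdefault Dloop), P.Closed ∧ P.Successful := by
  rintro ⟨P, hC, hS⟩
  set G : Set (Fm MAtom) :=
    (TDdefault Dloop).W ∪ {φ | ∃ n δ, P.seq n = some δ ∧ φ = δ.cons} with hGdef
  have hIn : P.In = Th G := rfl
  have hGatoms : ∀ φ ∈ G, ∃ a, φ = Fm.atom a := by
    rintro φ (hW | ⟨n, δ, hn, rfl⟩)
    · rcases mem_WD_Dloop.mp hW with rfl | rfl | rfl <;> exact ⟨_, rfl⟩
    · have hδ : δ ∈ DefD := P.mem n δ hn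
      simp only [DefD, Set.mem_setOf_eq] at hδ
      rcases hδ with ⟨X, rfl⟩ | ⟨R, X, Ys, rfl⟩ | ⟨X, rfl⟩ | ⟨R, X, Ys, rfl⟩ |
        ⟨R, S', X, Us, rfl⟩ | ⟨S', T', X, Vs, rfl⟩ | ⟨N, H, B, rfl⟩ | ⟨N, H, B, rfl⟩ |
        ⟨N, H, B, rfl⟩ | ⟨N, H, B, rfl⟩ <;> exact ⟨_, rfl⟩
  have hpre : ∀ n δ, P.seq n = some δ → δ.pre ∈ Th G := by
    intro n δ hn
    refine Th_mono' ?_ (P.applicable n δ hn).1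
    rintro φ (h | ⟨m, _, δ', h1, h2⟩)
    · exact Or.inl h
    · exact Or.inr ⟨m, δ', h1, h2⟩
  have hjust : ∀ n δ, P.seq n = some δ → ∀ ψ ∈ δ.just, ψ.neg ∉ Th G := by
    intro n δ hn ψ hψ hmem
    have hcontra : ψ.neg ∈ P.In ∩ P.Out := ⟨hmem, ⟨n, δ, hn, ψ, hψ, rfl⟩⟩
    rw [hS] at hcontra
    exact hcontra
  have hcl : ∀ δ : Default MAtom, δ ∈ DefD → δ.pre ∈ Th G →
      (∀ ψ ∈ δ.just, ψ.neg ∉ Th G) → δ.cons ∈ G := by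
    intro δ hδ h1 h2
    obtain ⟨n, hn⟩ := hC δ hδ ⟨h1, h2⟩
    exact Or.inr ⟨n, δ, hn, rfl⟩
  have hMinv : ∀ a : MAtom, Fm.atom a ∈ G →
      (a = .defeasible 1 (Lit.pos 0) [] ∨ a = .defeasible 2 (Lit.pos 1) [Lit.pos 0] ∨
       a = .defeasible 3 (Lit.neg 0) [Lit.pos 1]) ∨
      ∃ n δ, P.seq n = some δ ∧ δ ∈ DefD ∧ Fm.atom a = δ.cons := by
    rintro a (hW | ⟨n, δ, hn, hc⟩)
    · rcases mem_WD_Dloop.mp hW with h | h | h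
      · exact Or.inl (Or.inl (by injection h))
      · exact Or.inl (Or.inr (Or.inl (by injection h)))
      · exact Or.inl (Or.inr (Or.inr (by injection h)))
    · exact Or.inr ⟨n, δ, hn, P.mem n δ hn, hc⟩
  -- no fact / strict / defeater / sup atoms
  have hnofact : ∀ X, Fm.atom (MAtom.fact X) ∉ G := by
    intro X h
    rcases hMinv _ h with (h | h | h) | ⟨n, δ, hn, hδ, hc⟩
    · simp at h
    · simp at h
    · simp at h
    · simp only [DefD, Set.mem_setOf_eq] at hδ
      rcases hδ with ⟨X', rfl⟩ | ⟨R, X', Ys, rfl⟩ | ⟨X', rfl⟩ | ⟨R, X', Ys, rfl⟩ |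
        ⟨R, S', X', Us, rfl⟩ | ⟨S', T', X', Vs, rfl⟩ | ⟨N, H, B, rfl⟩ | ⟨N, H, B, rfl⟩ |
        ⟨N, H, B, rfl⟩ | ⟨N, H, B, rfl⟩ <;> simp at hc
  have hnostrict : ∀ N H B, Fm.atom (MAtom.strict N H B) ∉ G := by
    intro N H B h
    rcases hMinv _ h with (h | h | h) | ⟨n, δ, hn, hδ, hc⟩
    · simp at h
    · simp at h
    · simp at h
    · simp only [DefD, Set.mem_setOf_eq] at hδ
      rcases hδ with ⟨X', rfl⟩ | ⟨R, X', Ys, rfl⟩ | ⟨X', rfl⟩ | ⟨R, X', Ys, rfl⟩ |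
        ⟨R, S', X', Us, rfl⟩ | ⟨S', T', X', Vs, rfl⟩ | ⟨N', H', B', rfl⟩ | ⟨N', H', B', rfl⟩ |
        ⟨N', H', B', rfl⟩ | ⟨N', H', B', rfl⟩ <;> simp at hc
  have hnodefeaterA : ∀ N H B, Fm.atom (MAtom.defeater N H B) ∉ G := by
    intro N H B h
    rcases hMinv _ h with (h | h | h) | ⟨n, δ, hn, hδ, hc⟩
    · simp at h
    · simp at h
    · simp at h
    · simp only [DefD, Set.mem_setOf_eq] at hδ
      rcases hδ with ⟨X', rfl⟩ | ⟨R, X', Ys, rfl⟩ | ⟨X', rfl⟩ | ⟨R, X', Ys, rfl⟩ |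
        ⟨R, S', X', Us, rfl⟩ | ⟨S', T', X', Vs, rfl⟩ | ⟨N', H', B', rfl⟩ | ⟨N', H', B', rfl⟩ |
        ⟨N', H', B', rfl⟩ | ⟨N', H', B', rfl⟩ <;> simp at hc
  have hnosup : ∀ R S, Fm.atom (MAtom.sup R S) ∉ G := by
    intro R S h
    rcases hMinv _ h with (h | h | h) | ⟨n, δ, hn, hδ, hc⟩
    · simp at h
    · simp at h
    · simp at h
    · simp only [DefD, Set.mem_setOf_eq] at hδ
      rcases hδ with ⟨X', rfl⟩ | ⟨R', X', Ys, rfl⟩ | ⟨X', rfl⟩ | ⟨R', X', Ys, rfl⟩ |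
        ⟨R', S', X', Us, rfl⟩ | ⟨S', T', X', Vs, rfl⟩ | ⟨N', H', B', rfl⟩ | ⟨N', H', B', rfl⟩ |
        ⟨N', H', B', rfl⟩ | ⟨N', H', B', rfl⟩ <;> simp at hc
  have hnodefeated : ∀ S X, Fm.atom (MAtom.defeated S X) ∉ G := by
    intro S X h
    rcases hMinv _ h with (h | h | h) | ⟨n, δ, hn, hδ, hc⟩
    · simp at h
    · simp at h
    · simp at h
    · simp only [DefD, Set.mem_setOf_eq] at hδ
      rcases hδ with ⟨X', rfl⟩ | ⟨R', X', Ys, rfl⟩ | ⟨X', rfl⟩ | ⟨R', X', Ys, rfl⟩ |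
        ⟨R', S', X', Us, rfl⟩ | ⟨S', T', X', Vs, rfl⟩ | ⟨N', H', B', rfl⟩ | ⟨N', H', B', rfl⟩ |
        ⟨N', H', B', rfl⟩ | ⟨N', H', B', rfl⟩
      · simp at hc
      · simp at hc
      · simp at hc
      · simp at hc
      · simp at hc
      · -- d₆ : prerequisite contains a sup atom
        have hp := hpre n _ hn
        have h1 := (conjList_mem_Th' _).mp hp (Fm.atom (.sup T' S')) (by simp)
        exact hnosup T' S' ((atom_mem_Th' hGatoms _).mp h1)
      · simp at hc
      · simp at hc
      · simp at hc
      · simp at hc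
  have hnodef : ∀ X, Fm.atom (MAtom.definitely X) ∉ G := by
    intro X h
    rcases hMinv _ h with (h | h | h) | ⟨n, δ, hn, hδ, hc⟩
    · simp at h
    · simp at h
    · simp at h
    · simp only [DefD, Set.mem_setOf_eq] at hδ
      rcases hδ with ⟨X', rfl⟩ | ⟨R', X', Ys, rfl⟩ | ⟨X', rfl⟩ | ⟨R', X', Ys, rfl⟩ |
        ⟨R', S', X', Us, rfl⟩ | ⟨S', T', X', Vs, rfl⟩ | ⟨N', H', B', rfl⟩ | ⟨N', H', B', rfl⟩ |
        ⟨N', H', B', rfl⟩ | ⟨N', H', B', rfl⟩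
      · -- d₁ : prerequisite is a fact atom
        have hp := hpre n _ hn
        exact hnofact X' ((atom_mem_Th' hGatoms _).mp hp)
      · -- d₂ : prerequisite contains a strict atom
        have hp := hpre n _ hn
        have h1 := (conjList_mem_Th' _).mp hp (Fm.atom (.strict R' X' Ys)) (by simp)
        exact hnostrict R' X' Ys ((atom_mem_Th' hGatoms _).mp h1)
      · simp at hc
      · simp at hc
      · simp at hc
      · simp at hc
      · simp at hc
      · simp at hc
      · simp at hc
      · simp at hc
  have hdef3 : ∀ N H B, Fm.atom (MAtom.defeasible N H B) ∈ G →
      (N = 1 ∧ H = Lit.pos 0 ∧ B = ([] : List Lit)) ∨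
      (N = 2 ∧ H = Lit.pos 1 ∧ B = [Lit.pos 0]) ∨
      (N = 3 ∧ H = Lit.neg 0 ∧ B = [Lit.pos 1]) := by
    intro N H B h
    rcases hMinv _ h with (h | h | h) | ⟨n, δ, hn, hδ, hc⟩
    · exact Or.inl (by simpa using h)
    · exact Or.inr (Or.inl (by simpa using h))
    · exact Or.inr (Or.inr (by simpa using h))
    · simp only [DefD, Set.mem_setOf_eq] at hδ
      rcases hδ with ⟨X', rfl⟩ | ⟨R', X', Ys, rfl⟩ | ⟨X', rfl⟩ | ⟨R', X', Ys, rfl⟩ |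
        ⟨R', S', X', Us, rfl⟩ | ⟨S', T', X', Vs, rfl⟩ | ⟨N', H', B', rfl⟩ | ⟨N', H', B', rfl⟩ |
        ⟨N', H', B', rfl⟩ | ⟨N', H', B', rfl⟩ <;> simp at hc
  have hSRfwd : ∀ N H B, Fm.atom (MAtom.supportive_rule N H B) ∈ G →
      (N = 1 ∧ H = Lit.pos 0 ∧ B = ([] : List Lit)) ∨
      (N = 2 ∧ H = Lit.pos 1 ∧ B = [Lit.pos 0]) ∨
      (N = 3 ∧ H = Lit.neg 0 ∧ B = [Lit.pos 1]) := by
    intro N H B h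
    rcases hMinv _ h with (h | h | h) | ⟨n, δ, hn, hδ, hc⟩
    · simp at h
    · simp at h
    · simp at h
    · simp only [DefD, Set.mem_setOf_eq] at hδ
      rcases hδ with ⟨X', rfl⟩ | ⟨R', X', Ys, rfl⟩ | ⟨X', rfl⟩ | ⟨R', X', Ys, rfl⟩ |
        ⟨R', S', X', Us, rfl⟩ | ⟨S', T', X', Vs, rfl⟩ | ⟨N', H', B', rfl⟩ | ⟨N', H', B', rfl⟩ |
        ⟨N', H', B', rfl⟩ | ⟨N', H', B', rfl⟩
      · simp at hc
      · simp at hc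
      · simp at hc
      · simp at hc
      · simp at hc
      · simp at hc
      · -- d₇ : prerequisite is a strict atom
        have hp := hpre n _ hn
        exact absurd ((atom_mem_Th' hGatoms _).mp hp) (hnostrict N' H' B')
      · -- d₈ : prerequisite is a defeasible atom
        simp only [Fm.atom.injEq, MAtom.supportive_rule.injEq] at hc
        obtain ⟨rfl, rfl, rfl⟩ := hc
        have hp := hpre n _ hn
        exact hdef3 N H B ((atom_mem_Th' hGatoms _).mp hp)
      · simp at hc
      · simp at hc
  have hrulefwd : ∀ N H B, Fm.atom (MAtom.rule N H B) ∈ G →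
      (N = 1 ∧ H = Lit.pos 0 ∧ B = ([] : List Lit)) ∨
      (N = 2 ∧ H = Lit.pos 1 ∧ B = [Lit.pos 0]) ∨
      (N = 3 ∧ H = Lit.neg 0 ∧ B = [Lit.pos 1]) := by
    intro N H B h
    rcases hMinv _ h with (h | h | h) | ⟨n, δ, hn, hδ, hc⟩
    · simp at h
    · simp at h
    · simp at h
    · simp only [DefD, Set.mem_setOf_eq] at hδ
      rcases hδ with ⟨X', rfl⟩ | ⟨R', X', Ys, rfl⟩ | ⟨X', rfl⟩ | ⟨R', X', Ys, rfl⟩ |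
        ⟨R', S', X', Us, rfl⟩ | ⟨S', T', X', Vs, rfl⟩ | ⟨N', H', B', rfl⟩ | ⟨N', H', B', rfl⟩ |
        ⟨N', H', B', rfl⟩ | ⟨N', H', B', rfl⟩
      · simp at hc
      · simp at hc
      · simp at hc
      · simp at hc
      · simp at hc
      · simp at hc
      · simp at hc
      · simp at hc
      · -- d₉ : prerequisite is a supportive_rule atom
        simp only [Fm.atom.injEq, MAtom.rule.injEq] at hc
        obtain ⟨rfl, rfl, rfl⟩ := hc
        have hp := hpre n _ hn
        exact hSRfwd N H B ((atom_mem_Th' hGatoms _).mp hp)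
      · -- d₁₀ : prerequisite is a defeater atom
        have hp := hpre n _ hn
        exact absurd ((atom_mem_Th' hGatoms _).mp hp) (hnodefeaterA N' H' B')
  have hSRback : ∀ N H B, Fm.atom (MAtom.defeasible N H B) ∈ G →
      Fm.atom (MAtom.supportive_rule N H B) ∈ G := by
    intro N H B h
    refine hcl ⟨.atom (.defeasible N H B), [], .atom (.supportive_rule N H B)⟩ ?_ ?_ ?_
    · show _ ∨ _
      exact Or.inr (Or.inr (Or.inr (Or.inr (Or.inr (Or.inr (Or.inr (Or.inl
        ⟨N, H, B, rfl⟩)))))))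
    · exact subset_Th' _ h
    · simp
  have hruleback : ∀ N H B, Fm.atom (MAtom.supportive_rule N H B) ∈ G →
      Fm.atom (MAtom.rule N H B) ∈ G := by
    intro N H B h
    refine hcl ⟨.atom (.supportive_rule N H B), [], .atom (.rule N H B)⟩ ?_ ?_ ?_
    · show _ ∨ _
      exact Or.inr (Or.inr (Or.inr (Or.inr (Or.inr (Or.inr (Or.inr (Or.inr (Or.inl
        ⟨N, H, B, rfl⟩))))))))
    · exact subset_Th' _ h
    · simp
  have hnooverq : ∀ R, Fm.atom (MAtom.overruled R (Lit.pos 1)) ∉ G := by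
    intro R h
    rcases hMinv _ h with (h | h | h) | ⟨n, δ, hn, hδ, hc⟩
    · simp at h
    · simp at h
    · simp at h
    · simp only [DefD, Set.mem_setOf_eq] at hδ
      rcases hδ with ⟨X', rfl⟩ | ⟨R', X', Ys, rfl⟩ | ⟨X', rfl⟩ | ⟨R', X', Ys, rfl⟩ |
        ⟨R', S', X', Us, rfl⟩ | ⟨S', T', X', Vs, rfl⟩ | ⟨N', H', B', rfl⟩ | ⟨N', H', B', rfl⟩ |
        ⟨N', H', B', rfl⟩ | ⟨N', H', B', rfl⟩
      · simp at hc
      · simp at hc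
      · simp at hc
      · simp at hc
      · -- d₅ : prerequisite contains rule S' (pos 1).compl Us
        simp only [Fm.atom.injEq, MAtom.overruled.injEq] at hc
        obtain ⟨rfl, rfl⟩ := hc
        have hp := hpre n _ hn
        have h1 := (conjList_mem_Th' _).mp hp (Fm.atom (.rule S' (Lit.pos 1).compl Us)) (by simp)
        have h2 := hrulefwd _ _ _ ((atom_mem_Th' hGatoms _).mp h1)
        rcases h2 with ⟨_, h3, _⟩ | ⟨_, h3, _⟩ | ⟨_, h3, _⟩ <;> simp [Lit.compl] at h3
      · simp at hc
      · simp at hc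
      · simp at hc
      · simp at hc
      · simp at hc
  have hq_to_p : Fm.atom (MAtom.defeasibly (Lit.pos 1)) ∈ G →
      Fm.atom (MAtom.defeasibly (Lit.pos 0)) ∈ G := by
    intro h
    rcases hMinv _ h with (h | h | h) | ⟨n, δ, hn, hδ, hc⟩
    · simp at h
    · simp at h
    · simp at h
    · simp only [DefD, Set.mem_setOf_eq] at hδ
      rcases hδ with ⟨X', rfl⟩ | ⟨R', X', Ys, rfl⟩ | ⟨X', rfl⟩ | ⟨R', X', Ys, rfl⟩ |
        ⟨R', S', X', Us, rfl⟩ | ⟨S', T', X', Vs, rfl⟩ | ⟨N', H', B', rfl⟩ | ⟨N', H', B', rfl⟩ |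
        ⟨N', H', B', rfl⟩ | ⟨N', H', B', rfl⟩
      · simp at hc
      · simp at hc
      · -- d₃ : prerequisite is a definitely atom
        simp only [Fm.atom.injEq, MAtom.defeasibly.injEq] at hc
        obtain rfl := hc
        have hp := hpre n _ hn
        exact absurd ((atom_mem_Th' hGatoms _).mp hp) (hnodef _)
      · -- d₄
        simp only [Fm.atom.injEq, MAtom.defeasibly.injEq] at hc
        obtain rfl := hc
        have hp := hpre n _ hn
        have h1 := (conjList_mem_Th' _).mp hp (Fm.atom (.supportive_rule R' (Lit.pos 1) Ys))
          (by simp)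
        have h2 := hSRfwd _ _ _ ((atom_mem_Th' hGatoms _).mp h1)
        rcases h2 with ⟨_, h3, _⟩ | ⟨_, _, rfl⟩ | ⟨_, h3, _⟩
        · simp at h3
        · have h4 := (conjList_mem_Th' _).mp hp (Fm.atom (.defeasibly (Lit.pos 0))) (by simp)
          exact (atom_mem_Th' hGatoms _).mp h4
        · simp at h3
      · simp at hc
      · simp at hc
      · simp at hc
      · simp at hc
      · simp at hc
      · simp at hc
  have hover_inv : Fm.atom (MAtom.overruled 1 (Lit.pos 0)) ∈ G →
      Fm.atom (MAtom.defeasibly (Lit.pos 1)) ∈ G := by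
    intro h
    rcases hMinv _ h with (h | h | h) | ⟨n, δ, hn, hδ, hc⟩
    · simp at h
    · simp at h
    · simp at h
    · simp only [DefD, Set.mem_setOf_eq] at hδ
      rcases hδ with ⟨X', rfl⟩ | ⟨R', X', Ys, rfl⟩ | ⟨X', rfl⟩ | ⟨R', X', Ys, rfl⟩ |
        ⟨R', S', X', Us, rfl⟩ | ⟨S', T', X', Vs, rfl⟩ | ⟨N', H', B', rfl⟩ | ⟨N', H', B', rfl⟩ |
        ⟨N', H', B', rfl⟩ | ⟨N', H', B', rfl⟩
      · simp at hc
      · simp at hc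
      · simp at hc
      · simp at hc
      · -- d₅
        simp only [Fm.atom.injEq, MAtom.overruled.injEq] at hc
        obtain ⟨rfl, rfl⟩ := hc
        have hp := hpre n _ hn
        have h1 := (conjList_mem_Th' _).mp hp (Fm.atom (.rule S' (Lit.pos 0).compl Us)) (by simp)
        have h2 := hrulefwd _ _ _ ((atom_mem_Th' hGatoms _).mp h1)
        rcases h2 with ⟨_, h3, _⟩ | ⟨_, h3, _⟩ | ⟨_, _, rfl⟩
        · simp [Lit.compl] at h3
        · simp [Lit.compl] at h3
        · have h4 := (conjList_mem_Th' _).mp hp (Fm.atom (.defeasibly (Lit.pos 1))) (by simp)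
          exact (atom_mem_Th' hGatoms _).mp h4
      · simp at hc
      · simp at hc
      · simp at hc
      · simp at hc
      · simp at hc
  -- the three W atoms and their consequences
  have hWp : Fm.atom (MAtom.defeasible 1 (Lit.pos 0) []) ∈ G :=
    Or.inl (mem_WD_Dloop.mpr (Or.inl rfl))
  have hWq : Fm.atom (MAtom.defeasible 2 (Lit.pos 1) [Lit.pos 0]) ∈ G :=
    Or.inl (mem_WD_Dloop.mpr (Or.inr (Or.inl rfl)))
  have hWr : Fm.atom (MAtom.defeasible 3 (Lit.neg 0) [Lit.pos 1]) ∈ G :=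
    Or.inl (mem_WD_Dloop.mpr (Or.inr (Or.inr rfl)))
  have hSR1 := hSRback _ _ _ hWp
  have hSR2 := hSRback _ _ _ hWq
  have hSR3 := hSRback _ _ _ hWr
  have hR3 := hruleback _ _ _ hSR3
  -- defeasibly p holds
  have hMp : Fm.atom (MAtom.defeasibly (Lit.pos 0)) ∈ G := by
    by_contra hnp
    have hnov : Fm.atom (MAtom.overruled 1 (Lit.pos 0)) ∉ G :=
      fun h => hnp (hq_to_p (hover_inv h))
    apply hnp
    refine hcl ⟨Fm.conjList [.atom (.supportive_rule 1 (Lit.pos 0) [])],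
      [Fm.neg (.atom (.definitely (Lit.pos 0).compl)), Fm.neg (.atom (.overruled 1 (Lit.pos 0)))],
      .atom (.defeasibly (Lit.pos 0))⟩ ?_ ?_ ?_
    · show _ ∨ _
      exact Or.inr (Or.inr (Or.inr (Or.inl ⟨1, Lit.pos 0, [], rfl⟩)))
    · refine (conjList_mem_Th' _).mpr ?_
      intro φ hφ
      simp only [List.mem_singleton] at hφ
      subst hφ
      exact subset_Th' _ hSR1
    · intro ψ hψ hmem
      simp only [List.mem_cons, List.mem_singleton] at hψ
      rcases hψ with rfl | rfl | h
      · exact hnodef _ ((negneg_mem_Th' hGatoms _).mp hmem)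
      · exact hnov ((negneg_mem_Th' hGatoms _).mp hmem)
      · exact absurd h List.not_mem_nil
  -- defeasibly q holds
  have hMq : Fm.atom (MAtom.defeasibly (Lit.pos 1)) ∈ G := by
    refine hcl ⟨Fm.conjList [.atom (.supportive_rule 2 (Lit.pos 1) [Lit.pos 0]),
        .atom (.defeasibly (Lit.pos 0))],
      [Fm.neg (.atom (.definitely (Lit.pos 1).compl)), Fm.neg (.atom (.overruled 2 (Lit.pos 1)))],
      .atom (.defeasibly (Lit.pos 1))⟩ ?_ ?_ ?_
    · show _ ∨ _
      exact Or.inr (Or.inr (Or.inr (Or.inl ⟨2, Lit.pos 1, [Lit.pos 0], rfl⟩)))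
    · refine (conjList_mem_Th' _).mpr ?_
      intro φ hφ
      simp only [List.mem_cons, List.mem_singleton] at hφ
      rcases hφ with rfl | rfl | h
      · exact subset_Th' _ hSR2
      · exact subset_Th' _ hMp
      · exact absurd h List.not_mem_nil
    · intro ψ hψ hmem
      simp only [List.mem_cons, List.mem_singleton] at hψ
      rcases hψ with rfl | rfl | h
      · exact hnodef _ ((negneg_mem_Th' hGatoms _).mp hmem)
      · exact hnooverq 2 ((negneg_mem_Th' hGatoms _).mp hmem)
      · exact absurd h List.not_mem_nil
  -- overruled 1 p holds (via d₅ with S = 3)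
  have hOv : Fm.atom (MAtom.overruled 1 (Lit.pos 0)) ∈ G := by
    refine hcl ⟨Fm.conjList [.atom (.rule 3 (Lit.pos 0).compl [Lit.pos 1]),
        .atom (.defeasibly (Lit.pos 1))],
      [Fm.neg (.atom (.defeated 3 (Lit.pos 0).compl))],
      .atom (.overruled 1 (Lit.pos 0))⟩ ?_ ?_ ?_
    · show _ ∨ _
      exact Or.inr (Or.inr (Or.inr (Or.inr (Or.inl ⟨1, 3, Lit.pos 0, [Lit.pos 1], rfl⟩))))
    · refine (conjList_mem_Th' _).mpr ?_
      intro φ hφ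
      simp only [List.mem_cons, List.mem_singleton] at hφ
      rcases hφ with rfl | rfl | h
      · exact subset_Th' _ hR3
      · exact subset_Th' _ hMq
      · exact absurd h List.not_mem_nil
    · intro ψ hψ hmem
      simp only [List.mem_singleton] at hψ
      subst hψ
      exact hnodefeated _ _ ((negneg_mem_Th' hGatoms _).mp hmem)
  -- final contradiction: invert hMp
  rcases hMinv _ hMp with (h | h | h) | ⟨n, δ, hn, hδ, hc⟩
  · simp at h
  · simp at h
  · simp at h
  · simp only [DefD, Set.mem_setOf_eq] at hδ
    rcases hδ with ⟨X', rfl⟩ | ⟨R', X', Ys, rfl⟩ | ⟨X', rfl⟩ | ⟨R', X', Ys, rfl⟩ |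
      ⟨R', S', X', Us, rfl⟩ | ⟨S', T', X', Vs, rfl⟩ | ⟨N', H', B', rfl⟩ | ⟨N', H', B', rfl⟩ |
      ⟨N', H', B', rfl⟩ | ⟨N', H', B', rfl⟩
    · simp at hc
    · simp at hc
    · -- d₃
      simp only [Fm.atom.injEq, MAtom.defeasibly.injEq] at hc
      obtain rfl := hc
      have hp := hpre n _ hn
      exact absurd ((atom_mem_Th' hGatoms _).mp hp) (hnodef _)
    · -- d₄ : the only way to get defeasibly p, with R' = 1
      simp only [Fm.atom.injEq, MAtom.defeasibly.injEq] at hc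
      obtain rfl := hc
      have hp := hpre n _ hn
      have h1 := (conjList_mem_Th' _).mp hp (Fm.atom (.supportive_rule R' (Lit.pos 0) Ys))
        (by simp)
      have h2 := hSRfwd _ _ _ ((atom_mem_Th' hGatoms _).mp h1)
      rcases h2 with ⟨rfl, _, rfl⟩ | ⟨_, h3, _⟩ | ⟨_, h3, _⟩
      · -- justification ¬overruled(1, p) is violated by hOv
        have hj := hjust n _ hn (Fm.neg (.atom (.overruled 1 (Lit.pos 0)))) (by simp)
        exact hj ((negneg_mem_Th' hGatoms _).mpr hOv)
      · simp at h3
      · simp at h3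
    · simp at hc
    · simp at hc
    · simp at hc
    · simp at hc
    · simp at hc
    · simp at hc

/-- `T(Dloop)` has no closed and successful process, hence no
extension; in particular there exists a defeasible theory whose default-theory
translation has no extension. -/
theorem no_extension_example :
    (¬ ∃ P : DProcess (TDdefault Dloop), P.Closed ∧ P.Successful) ∧
    (¬ ∃ E : Set (Fm MAtom), IsExtension (TDdefault Dloop) E) ∧
    (∃ D : DTheory, ¬ ∃ E : Set (Fm MAtom), IsExtension (TDdefault D) E) := by
  refine ⟨TDloop_no_process, ?_, ?_⟩
  · rintro ⟨E, P, hC, hS, _⟩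
    exact TDloop_no_process ⟨P, hC, hS⟩
  · refine ⟨Dloop, ?_⟩
    rintro ⟨E, P, hC, hS, _⟩
    exact TDloop_no_process ⟨P, hC, hS⟩
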